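/- Let 0 < γ < 1 and let f ∈ H(𝔻) be 𝒰_{β^γ}-frequently hypercyclic for T_α. Then: if α ≤ 0, limsup_{r→1⁻} (1−r)^{−α} · M_1(f,r) = +∞; and if α > 0, limsup_{r→1⁻} M_1(f,r) > 0. -/

import Mathlib

open Filter Set MeasureTheory
open scoped Topology ENNReal Real Classical

noncomputable section

/-- The weighted Taylor shift `T_α` acting on Taylor-coefficient sequences:
`(T_α a) k = a (k+1) * (1 + 1/(k+1))^α`. -/
def Tshift (α : ℝ) (a : ℕ → ℂ) : ℕ → ℂ :=
  fun k => a (k + 1) * (((1 + 1 / ((k : ℝ) + 1)) ^ α : ℝ) : ℂ)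

/-- The holomorphic function on the unit disc determined by a coefficient sequence. -/
def sumFn (a : ℕ → ℂ) : ℂ → ℂ := fun z => ∑' k : ℕ, a k * z ^ k

/-- `a` is the Taylor-coefficient sequence of a function in `H(𝔻)`
(the power series converges on every disc of radius `r < 1`). -/
def InHD (a : ℕ → ℂ) : Prop :=
  ∀ r : ℝ, 0 ≤ r → r < 1 → Summable (fun k : ℕ => ‖a k‖ * r ^ k)

/-- The integral mean `M_p(f, r)`, `1 ≤ p ≤ ∞`, of the function with coefficient
sequence `a`. -/
def Mp (p : ℝ≥0∞) (a : ℕ → ℂ) (r : ℝ) : ℝ :=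
  if p = ∞ then
    sSup ((fun t : ℝ => ‖sumFn a (r * Complex.exp (Complex.I * t))‖) '' Set.Icc 0 (2 * π))
  else
    (1 / (2 * π) * ∫ t in (0:ℝ)..(2 * π),
      ‖sumFn a (r * Complex.exp (Complex.I * t))‖ ^ p.toReal) ^ (1 / p.toReal)

/-- Upper weighted density of `A ⊆ ℕ` associated with a weight sequence `β`. -/
def upperDensityWt (β : ℕ → ℝ) (A : Set ℕ) : ℝ :=
  Filter.limsup (fun n : ℕ =>
    (∑ k ∈ Finset.Icc 1 n, A.indicator (fun j => β j) k) / ∑ k ∈ Finset.Icc 1 n, β k)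
    Filter.atTop

/-- The weight sequence `β^γ = (e^{n^γ})`. -/
def betaGamma (γ : ℝ) : ℕ → ℝ := fun n => Real.exp ((n : ℝ) ^ γ)

/-- `a` is hypercyclic for `T_α`: its orbit is dense in `H(𝔻)` for the topology of
uniform convergence on compact subsets of the unit disc. -/
def Hypercyclic (α : ℝ) (a : ℕ → ℂ) : Prop :=
  ∀ b : ℕ → ℂ, InHD b → ∀ K : Set ℂ, IsCompact K → K ⊆ Metric.ball (0 : ℂ) 1 →
    ∀ ε : ℝ, 0 < ε → ∃ n : ℕ, ∀ z ∈ K, ‖sumFn ((Tshift α)^[n] a) z - sumFn b z‖ < ε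

/-- `a` is `𝒰_β`-frequently hypercyclic for `T_α`: for every nonempty basic open set of
`H(𝔻)`, the set of return times has positive upper `β`-density. -/
def UFHCwt (β : ℕ → ℝ) (α : ℝ) (a : ℕ → ℂ) : Prop :=
  ∀ b : ℕ → ℂ, InHD b → ∀ K : Set ℂ, IsCompact K → K ⊆ Metric.ball (0 : ℂ) 1 →
    ∀ ε : ℝ, 0 < ε →
      0 < upperDensityWt β
        {n : ℕ | ∀ z ∈ K, ‖sumFn ((Tshift α)^[n] a) z - sumFn b z‖ < ε}

/-- `a` is `𝒰`-frequently hypercyclic for `T_α` (natural upper density of return times). -/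
def UFreqHC (α : ℝ) (a : ℕ → ℂ) : Prop := UFHCwt (fun _ => 1) α a

/-- The conjugate exponent `q` of `p` (`q = 1` when `p = ∞`). -/
def qConj (p : ℝ≥0∞) : ℝ := if p = ∞ then 1 else p.toReal / (p.toReal - 1)

/-- The quantity `1 / max(2, q)`, interpreted as `0` when `p = 1`. -/
def critFactor (p : ℝ≥0∞) : ℝ := if p = 1 then 0 else 1 / max 2 (qConj p)

/-- `limsup_{r → 1⁻}` of a real-valued function of `r ∈ (0,1)`, computed in `EReal`. -/
def limsupR (g : ℝ → ℝ) : EReal :=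
  Filter.limsup (fun r : ℝ => (g r : EReal)) (nhdsWithin 1 (Set.Ioo 0 1))

end

/-! Since `(T_α^n f)(0) = (n+1)^α a_n`, the return times of `f` to a neighbourhood of a large
constant show that `|a_n| (n+1)^α` is unbounded along a sequence of `n`: a set of positive upper
`β^γ`-density is infinite because the weights are `≥ 1`. Cauchy's estimate
`|a_n| r^n ≤ M_1(f, r)` at `r = n/(n+1)`, where `r^n ≥ e⁻¹` and `(1-r)^{-α} = (n+1)^α`, gives
the first claim; for the second, a single nonzero coefficient `a_m` already keeps `M_1(f, r)`
above `e⁻¹ |a_m|` along the same radii. -/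

open FormalMultilinearSeries in
lemma InHD.hasFPowerSeriesOnBall {a : ℕ → ℂ} (ha : InHD a) :
    HasFPowerSeriesOnBall (sumFn a) (ofScalars ℂ a) 0 1 := by
  have hradius : 1 ≤ (ofScalars ℂ a).radius := by
    refine ENNReal.le_of_forall_nnreal_lt fun r hr => le_radius_of_summable _ ?_
    simpa only [ofScalars_norm] using ha r r.2 (by exact_mod_cast hr)
  have hP := (ofScalars ℂ a).hasFPowerSeriesOnBall (zero_lt_one.trans_le hradius)
  rw [← ofScalarsSum, ofScalarsSum_eq_tsum] at hP
  exact hP.mono one_pos hradius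

lemma Mp_one_eq_integral_circleMap (a : ℕ → ℂ) (r : ℝ) :
    Mp 1 a r = (2 * π)⁻¹ * ∫ θ in (0:ℝ)..2 * π, ‖sumFn a (circleMap 0 r θ)‖ := by
  simp [Mp, circleMap, mul_comm Complex.I]

lemma norm_coeff_mul_pow_le_Mp_one {a : ℕ → ℂ} (ha : InHD a) {r : ℝ} (hr0 : 0 < r)
    (hr1 : r < 1) (n : ℕ) : ‖a n‖ * r ^ n ≤ Mp 1 a r := by
  lift r to NNReal using hr0.le
  have hdiff : DifferentiableOn ℂ (sumFn a) (Metric.closedBall 0 r) := by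
    refine ha.hasFPowerSeriesOnBall.differentiableOn.mono ?_
    rw [← ENNReal.coe_one, Metric.eball_coe, NNReal.coe_one]
    exact Metric.closedBall_subset_ball hr1
  have hcoeff : FormalMultilinearSeries.ofScalars ℂ a = cauchyPowerSeries (sumFn a) 0 r :=
    ha.hasFPowerSeriesOnBall.hasFPowerSeriesAt.eq_formalMultilinearSeries
      (hdiff.hasFPowerSeriesOnBall (mod_cast hr0)).hasFPowerSeriesAt
  have hbound := norm_cauchyPowerSeries_le (sumFn a) 0 r n
  rw [← hcoeff, FormalMultilinearSeries.ofScalars_norm, ← Mp_one_eq_integral_circleMap,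
    abs_of_pos hr0] at hbound
  calc ‖a n‖ * r ^ n ≤ Mp 1 a r * (r : ℝ)⁻¹ ^ n * r ^ n := by gcongr
    _ = Mp 1 a r := by rw [mul_assoc, ← mul_pow, inv_mul_cancel₀ hr0.ne', one_pow, mul_one]

lemma Tshift_iterate_apply (α : ℝ) (a : ℕ → ℂ) (n k : ℕ) :
    ((Tshift α)^[n] a) k = a (k + n) * (((((k:ℝ) + n + 1) / ((k:ℝ) + 1)) ^ α : ℝ) : ℂ) := by
  induction n generalizing k with
  | zero => simp [div_self (Nat.cast_add_one_ne_zero k : (k:ℝ) + 1 ≠ 0)]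
  | succ n ih =>
    rw [Function.iterate_succ_apply', Tshift, ih, mul_assoc, ← Complex.ofReal_mul,
      ← Real.mul_rpow (by positivity) (by positivity), add_right_comm k 1 n, add_assoc k n 1]
    congr 3
    push_cast
    field_simp
    ring

lemma norm_Tshift_iterate_apply_zero (α : ℝ) (a : ℕ → ℂ) (n : ℕ) :
    ‖((Tshift α)^[n] a) 0‖ = ‖a n‖ * ((n:ℝ) + 1) ^ α := by
  rw [Tshift_iterate_apply, norm_mul, Complex.norm_real, Real.norm_of_nonneg (by positivity)]
  simp

lemma sumFn_zero (a : ℕ → ℂ) : sumFn a 0 = a 0 := by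
  rw [sumFn, tsum_eq_single 0 fun k hk => by simp [zero_pow hk]]
  simp

lemma inHD_single (z : ℂ) : InHD (Pi.single 0 z) := fun r _ _ =>
  summable_of_ne_finset_zero (s := {0}) fun k hk => by
    simp [Finset.mem_singleton.not.1 hk]

lemma upperDensityWt_eq_zero_of_bddAbove {β : ℕ → ℝ}
    (hβ : Tendsto (fun n => ∑ k ∈ Finset.Icc 1 n, β k) atTop atTop) {A : Set ℕ}
    (hA : BddAbove A) : upperDensityWt β A = 0 := by
  obtain ⟨m, hm⟩ := hA
  have hnum : (fun n => ∑ k ∈ Finset.Icc 1 n, A.indicator β k)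
      =ᶠ[atTop] fun _ => ∑ k ∈ Finset.Icc 1 m, A.indicator β k := by
    filter_upwards [eventually_ge_atTop m] with n hn
    refine (Finset.sum_subset (Finset.Icc_subset_Icc_right hn) fun k hkn hkm => ?_).symm
    refine indicator_of_notMem (fun hk => hkm ?_) _
    exact Finset.mem_Icc.2 ⟨(Finset.mem_Icc.1 hkn).1, hm hk⟩
  exact ((tendsto_const_nhds.congr' hnum.symm).div_atTop hβ).limsup_eq

lemma frequently_mem_of_upperDensityWt_pos {β : ℕ → ℝ}
    (hβ : Tendsto (fun n => ∑ k ∈ Finset.Icc 1 n, β k) atTop atTop) {A : Set ℕ}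
    (hA : 0 < upperDensityWt β A) : ∃ᶠ n in atTop, n ∈ A := by
  contrapose! hA
  obtain ⟨m, hm⟩ := eventually_atTop.1 hA
  refine (upperDensityWt_eq_zero_of_bddAbove hβ ⟨m, fun n hn => ?_⟩).le
  by_contra! h
  exact hm n h.le hn

lemma one_le_betaGamma (γ : ℝ) (n : ℕ) : 1 ≤ betaGamma γ n :=
  Real.one_le_exp (Real.rpow_nonneg n.cast_nonneg γ)

lemma tendsto_sum_betaGamma (γ : ℝ) :
    Tendsto (fun n => ∑ k ∈ Finset.Icc 1 n, betaGamma γ k) atTop atTop := by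
  refine tendsto_atTop_mono (fun n => ?_) tendsto_natCast_atTop_atTop
  calc (n : ℝ) = ∑ _k ∈ Finset.Icc 1 n, (1 : ℝ) := by simp
    _ ≤ _ := Finset.sum_le_sum fun k _ => one_le_betaGamma γ k

lemma UFHCwt.frequently_lt_norm_coeff_mul_rpow {β : ℕ → ℝ} {α : ℝ} {a : ℕ → ℂ}
    (hfa : UFHCwt β α a) (hβ : Tendsto (fun n => ∑ k ∈ Finset.Icc 1 n, β k) atTop atTop)
    (c : ℝ) : ∃ᶠ n in atTop, c < ‖a n‖ * ((n:ℝ) + 1) ^ α := by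
  have hK : ({0} : Set ℂ) ⊆ Metric.ball 0 1 := by simp
  have hret := frequently_mem_of_upperDensityWt_pos hβ
    (hfa _ (inHD_single ((c + 1 : ℝ) : ℂ)) _ isCompact_singleton hK 1 one_pos)
  refine hret.mono fun n hn => ?_
  have hclose := hn 0 rfl
  rw [sumFn_zero, sumFn_zero, Pi.single_eq_same] at hclose
  have := norm_sub_norm_le ((c + 1 : ℝ) : ℂ) (((Tshift α)^[n] a) 0)
  rw [norm_sub_rev, Complex.norm_real, norm_Tshift_iterate_apply_zero] at this
  linarith [le_abs_self (c + 1), Real.norm_eq_abs (c + 1)]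

lemma tendsto_natCast_div_add_one_nhdsWithin_Ioo :
    Tendsto (fun n : ℕ => (n : ℝ) / (n + 1)) atTop (𝓝[Ioo 0 1] 1) := by
  refine tendsto_nhdsWithin_iff.2 ⟨tendsto_natCast_div_add_atTop 1, ?_⟩
  filter_upwards [eventually_gt_atTop 0] with n hn
  exact ⟨by positivity, (div_lt_one (by positivity)).2 (lt_add_one _)⟩

lemma exp_neg_one_le_natCast_div_add_one_pow {m n : ℕ} (hmn : m ≤ n) :
    Real.exp (-1) ≤ ((n : ℝ) / (n + 1)) ^ m := by
  have hr1 : (n : ℝ) / (n + 1) ≤ 1 := (div_le_one (by positivity)).2 (by linarith)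
  refine le_trans ?_ (pow_le_pow_of_le_one (by positivity) hr1 hmn)
  rcases Nat.eq_zero_or_pos n with rfl | hn
  · simp
  have hn' : (0 : ℝ) < n := by exact_mod_cast hn
  have hexp : Real.exp (-1 / n) ≤ (n : ℝ) / (n + 1) := by
    rw [neg_div, Real.exp_neg, inv_le_comm₀ (Real.exp_pos _) (by positivity), inv_div,
      add_div, div_self hn'.ne', add_comm]
    exact Real.add_one_le_exp _
  calc Real.exp (-1) = Real.exp (-1 / n) ^ n := by
        rw [← Real.exp_nat_mul, mul_div_cancel₀ _ hn'.ne']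
    _ ≤ _ := pow_le_pow_left₀ (Real.exp_pos _).le hexp n

lemma exp_neg_one_mul_norm_coeff_le_Mp_one {a : ℕ → ℂ} (ha : InHD a) {m n : ℕ} (hn : 0 < n)
    (hmn : m ≤ n) : Real.exp (-1) * ‖a m‖ ≤ Mp 1 a (n / (n + 1)) := by
  have hr0 : (0 : ℝ) < n / (n + 1) := by positivity
  have hr1 : (n : ℝ) / (n + 1) < 1 := (div_lt_one (by positivity)).2 (lt_add_one _)
  calc Real.exp (-1) * ‖a m‖ ≤ ‖a m‖ * ((n : ℝ) / (n + 1)) ^ m := by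
        rw [mul_comm]
        exact mul_le_mul_of_nonneg_left (exp_neg_one_le_natCast_div_add_one_pow hmn)
          (norm_nonneg _)
    _ ≤ Mp 1 a (n / (n + 1)) := norm_coeff_mul_pow_le_Mp_one ha hr0 hr1 m

lemma coe_le_limsupR_of_frequently {g : ℝ → ℝ} {c : ℝ}
    (h : ∃ᶠ n : ℕ in atTop, c ≤ g (n / (n + 1))) : (c : EReal) ≤ limsupR g :=
  le_limsup_of_frequently_le
    (tendsto_natCast_div_add_one_nhdsWithin_Ioo.frequently (h.mono fun _ hn => by
      exact_mod_cast hn))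

lemma limsupR_one_sub_rpow_mul_Mp_one_eq_top {a : ℕ → ℂ} (ha : InHD a) {α : ℝ}
    (hcoef : ∀ c : ℝ, ∃ᶠ n in atTop, c < ‖a n‖ * ((n : ℝ) + 1) ^ α) :
    limsupR (fun r => (1 - r) ^ (-α) * Mp 1 a r) = ⊤ := by
  refine (EReal.eq_top_iff_forall_lt _).2 fun C => ?_
  refine (EReal.coe_lt_coe_iff.2 (lt_add_one C)).trans_le (coe_le_limsupR_of_frequently ?_)
  refine ((hcoef ((C + 1) * Real.exp 1)).and_eventually (eventually_gt_atTop 0)).mono ?_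
  rintro n ⟨hlt, hn⟩
  have hweight : (1 - (n : ℝ) / (n + 1)) ^ (-α) = ((n : ℝ) + 1) ^ α := by
    rw [one_sub_div (by positivity), add_sub_cancel_left, one_div, Real.inv_rpow (by positivity),
      Real.rpow_neg (by positivity), inv_inv]
  rw [hweight]
  calc C + 1 = Real.exp (-1) * ((C + 1) * Real.exp 1) := by
        rw [mul_left_comm, ← Real.exp_add, neg_add_cancel, Real.exp_zero, mul_one]
    _ ≤ Real.exp (-1) * (‖a n‖ * ((n : ℝ) + 1) ^ α) := by gcongr
    _ = ((n : ℝ) + 1) ^ α * (Real.exp (-1) * ‖a n‖) := by ring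
    _ ≤ ((n : ℝ) + 1) ^ α * Mp 1 a (n / (n + 1)) := by
        gcongr
        exact exp_neg_one_mul_norm_coeff_le_Mp_one ha hn le_rfl

lemma limsupR_Mp_one_pos {a : ℕ → ℂ} (ha : InHD a) {m : ℕ} (hm : a m ≠ 0) :
    0 < limsupR (fun r => Mp 1 a r) := by
  have hpos : (0 : EReal) < ((Real.exp (-1) * ‖a m‖ : ℝ) : EReal) :=
    EReal.coe_pos.2 (mul_pos (Real.exp_pos _) (norm_pos_iff.2 hm))
  refine hpos.trans_le (coe_le_limsupR_of_frequently (Eventually.frequently ?_))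
  filter_upwards [eventually_ge_atTop (max m 1)] with n hn
  exact exp_neg_one_mul_norm_coeff_le_Mp_one ha (by omega) (le_of_max_le_left hn)

theorem stmt14_general (γ : ℝ) (α : ℝ) (a : ℕ → ℂ)
    (ha : InHD a) (hfa : UFHCwt (betaGamma γ) α a) :
    (α ≤ 0 → limsupR (fun r => (1 - r) ^ (-α) * Mp 1 a r) = ⊤) ∧
    (0 < α → 0 < limsupR (fun r => Mp 1 a r)) := by
  have hcoef := hfa.frequently_lt_norm_coeff_mul_rpow (tendsto_sum_betaGamma γ)
  refine ⟨fun _ => limsupR_one_sub_rpow_mul_Mp_one_eq_top ha hcoef, fun _ => ?_⟩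
  obtain ⟨m, hm⟩ := (hcoef 0).exists
  refine limsupR_Mp_one_pos ha (m := m) fun ham => ?_
  simp [ham] at hm

/-- Theorem 4.11 (lower estimates, `p = 1`): growth of `𝒰_{β^γ}`-frequently hypercyclic
functions for `T_α`, `0 < γ < 1`. -/
theorem stmt14 (γ : ℝ) (hγ0 : 0 < γ) (hγ1 : γ < 1) (α : ℝ) (a : ℕ → ℂ)
    (ha : InHD a) (hfa : UFHCwt (betaGamma γ) α a) :
    (α ≤ 0 → limsupR (fun r => (1 - r) ^ (-α) * Mp 1 a r) = ⊤) ∧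
    (0 < α → 0 < limsupR (fun r => Mp 1 a r)) :=
  stmt14_general γ α a ha hfa
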